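/- arXiv:0711.4835 — 4 statements merged into one kernel-verified Lean document; each statement's English description precedes it below -/
import Mathlib

section
/- Let f : ℂ → ℂ be a polynomial of degree d ≥ 2. There do not exist a constant c ∈ ℂ and a sequence (aₙ) of complex numbers, not all zero, such that the partial sums ∑_{n=0}^{N} aₙ · f^[n](w) converge to c uniformly on compact subsets of ℂ (i.e., f admits no global time average). -/
/-!
Splitting off the `n = 0` term, `∑_{n ≤ N+1} aₙ f^[n] w = a₀ w + ∑_{n ≤ N} aₙ₊₁ f^[n] (f w)`. If `f x = f y` with `x ≠ y`, the two
tails agree, so `a₀ x = a₀ y` and hence `a₀ = 0`. Then the tail sums converge to `c` at every point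
of the image of `f`, which is everything because `f` is surjective, and the shifted sequence
`(aₙ₊₁)` is again a time average; by induction all `aₙ` vanish. A complex polynomial of degree
`d ≥ 2` is surjective, and it is not injective: otherwise `f - f(0)` would have `0` as its only
root, so `f = f(0) + λ X^d`, which takes the same value at `1` and at a primitive `d`-th root of
unity.
-/

open Filter Topology Function Polynomial

namespace Polynomial

theorem not_injective_eval_of_two_le_natDegree {f : ℂ[X]} (hd : 2 ≤ f.natDegree) :
    ¬ Injective f.eval := by
  intro hinj
  set g := f - C (f.eval 0)
  have hg : g.natDegree = f.natDegree := natDegree_sub_C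
  have hroots : g.roots = Multiset.replicate g.natDegree 0 := by
    rw [← IsAlgClosed.card_roots_eq_natDegree]
    refine Multiset.eq_replicate_card.mpr fun r hr => hinj ?_
    simpa [g, sub_eq_zero] using isRoot_of_mem_roots hr
  have hmonomial : g = C g.leadingCoeff * X ^ g.natDegree := by
    conv_lhs => rw [← C_leadingCoeff_mul_prod_multiset_X_sub_C (p := g)
      IsAlgClosed.card_roots_eq_natDegree, hroots]
    simp
  obtain ⟨ζ, hζ⟩ : ∃ ζ : ℂ, IsPrimitiveRoot ζ g.natDegree :=
    ⟨_, Complex.isPrimitiveRoot_exp _ (by omega)⟩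
  have heval : g.eval ζ = g.eval 1 := by
    rw [hmonomial]
    simp [hζ.pow_eq_one]
  exact hζ.ne_one (by omega) (hinj (by simpa [g] using heval))

end Polynomial

section TimeAverage

variable {R : Type*} [Ring R]

theorem sum_range_succ_mul_iterate (f : R → R) (a : ℕ → R) (w : R) (N : ℕ) :
    ∑ n ∈ Finset.range (N + 2), a n * f^[n] w
      = a 0 * w + ∑ n ∈ Finset.range (N + 1), a (n + 1) * f^[n] (f w) := by
  rw [Finset.sum_range_succ', add_comm]
  simp only [iterate_succ_apply, iterate_zero_apply]

variable [TopologicalSpace R]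

def HasPointwiseTimeAverage (f : R → R) (a : ℕ → R) (c : R) : Prop :=
  ∀ w, Tendsto (fun N => ∑ n ∈ Finset.range (N + 1), a n * f^[n] w) atTop (𝓝 c)

namespace HasPointwiseTimeAverage

variable {f : R → R} {a : ℕ → R} {c : R}

theorem tendsto_add_tail (h : HasPointwiseTimeAverage f a c) (w : R) :
    Tendsto (fun N => a 0 * w + ∑ n ∈ Finset.range (N + 1), a (n + 1) * f^[n] (f w))
      atTop (𝓝 c) := by
  simp_rw [← sum_range_succ_mul_iterate]
  exact (h w).comp (tendsto_add_atTop_nat 1)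

theorem head_eq_zero [NoZeroDivisors R] [ContinuousSub R] [T2Space R]
    (h : HasPointwiseTimeAverage f a c) (hf : ¬ Injective f) : a 0 = 0 := by
  obtain ⟨x, y, hxy, hne⟩ := not_injective_iff.mp hf
  have hdiff := (h.tendsto_add_tail x).sub (h.tendsto_add_tail y)
  simp_rw [hxy, add_sub_add_right_eq_sub, sub_self] at hdiff
  have hmul : a 0 * (x - y) = 0 := by
    rw [mul_sub]
    exact tendsto_nhds_unique tendsto_const_nhds hdiff
  exact (mul_eq_zero.mp hmul).resolve_right (sub_ne_zero.mpr hne)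

theorem tail (h : HasPointwiseTimeAverage f a c) (hf : Surjective f) (h0 : a 0 = 0) :
    HasPointwiseTimeAverage f (fun n => a (n + 1)) c := by
  intro z
  obtain ⟨w, rfl⟩ := hf z
  simpa [h0] using h.tendsto_add_tail w

theorem eq_zero [NoZeroDivisors R] [ContinuousSub R] [T2Space R]
    (h : HasPointwiseTimeAverage f a c) (hsurj : Surjective f) (hinj : ¬ Injective f) :
    a = 0 := by
  funext n
  induction n generalizing a with
  | zero => exact h.head_eq_zero hinj
  | succ n ih => exact ih (h.tail hsurj (h.head_eq_zero hinj))

end HasPointwiseTimeAverage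

end TimeAverage

/-- A polynomial of degree at least 2 admits no global time average: there is no
not-identically-zero weight sequence `a` and constant `c` such that the partial sums
`∑_{n=0}^{N} aₙ f^[n]` converge locally uniformly (i.e. uniformly on compact subsets
of `ℂ`) to the constant function `c`. -/
theorem no_global_time_average (f : Polynomial ℂ) (hd : 2 ≤ f.natDegree) :
    ¬ ∃ (a : ℕ → ℂ) (c : ℂ), (∃ n, a n ≠ 0) ∧
      TendstoLocallyUniformly
        (fun N (w : ℂ) => ∑ n ∈ Finset.range (N + 1), a n * (f.eval)^[n] w)
        (fun _ => c) atTop := by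
  rintro ⟨a, c, ⟨n, hn⟩, hconv⟩
  have havg : HasPointwiseTimeAverage f.eval a c := fun w =>
    (hconv.tendstoLocallyUniformlyOn (s := Set.univ)).tendsto_at (Set.mem_univ w)
  have hzero := havg.eq_zero (IsAlgClosed.eval_surjective (by omega))
    (not_injective_eval_of_two_le_natDegree hd)
  exact hn (congrFun hzero n)
end

section
/- Let f : ℂᵏ → ℂᵏ be a polynomial endomorphism. Then sup_{n ∈ ℕ} deg(f^[n]) < ∞ if and only if there exist d ∈ ℕ with d ≥ 1 and complex numbers a₁, …, a_d, not all zero, such that a₁ f + a₂ f^[2] + ⋯ + a_d f^[d] = 0 as a polynomial map. -/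
open MvPolynomial

/-- The `n`-th iterate of a polynomial endomorphism of `ℂᵏ`, as a tuple of
multivariate polynomials. -/
noncomputable def mvIter {k : ℕ} (f : Fin k → MvPolynomial (Fin k) ℂ) :
    ℕ → Fin k → MvPolynomial (Fin k) ℂ
  | 0 => fun i => X i
  | n + 1 => fun i => bind₁ (mvIter f n) (f i)

/-!
Both directions are linear algebra for the substitution operator `T = bind₁ f`, for which
`f^[n] i = Tⁿ (X i)`. If all degrees are at most `D`, the iterates live in the
finite-dimensional space of `k`-tuples of polynomials of degree `≤ D`, so some `dim + 1` of
them are linearly dependent. Conversely a relation `∑ aⱼ f^[j+1] = 0` says that the nonzero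
polynomial `P = X · ∑ aⱼ Xʲ` satisfies `P(T) (X i) = 0`; reducing `Xⁿ` modulo `P` puts every
`Tⁿ (X i)` in the span of the finitely many `Tʲ (X i)` with `j < deg P`, which bounds degrees.
-/

open Module Submodule Set

theorem exists_ne_zero_sum_smul_eq_zero {K V : Type*} [Field K] [AddCommGroup V] [Module K V]
    [FiniteDimensional K V] (v : ℕ → V) :
    ∃ a : Fin (finrank K V + 1) → K, a ≠ 0 ∧ ∑ j, a j • v j = 0 := by
  have hv : ¬ LinearIndependent K fun j : Fin (finrank K V + 1) => v j := fun h => by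
    simpa using h.fintype_card_le_finrank
  obtain ⟨a, hsum, j, hj⟩ := Fintype.not_linearIndependent_iff.1 hv
  exact ⟨a, fun ha => hj (congrFun ha j), hsum⟩

theorem Polynomial.aeval_X_mul_ofFn {R A : Type*} [CommSemiring R] [DecidableEq R] [Semiring A]
    [Algebra R A] (x : A) (d : ℕ) (a : Fin d → R) :
    aeval x (X * ofFn d a) = ∑ j, a j • x ^ ((j : ℕ) + 1) := by
  simp [ofFn_eq_sum_monomial, Finset.mul_sum, pow_succ', Algebra.smul_def]

theorem Polynomial.X_mul_ofFn_ne_zero {R : Type*} [CommSemiring R] [DecidableEq R] {d : ℕ}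
    {a : Fin d → R} (ha : a ≠ 0) : X * ofFn d a ≠ 0 :=
  fun h => ha <| injective_ofFn d <|
    (isRegular_X.left (h.trans (mul_zero X).symm)).trans (map_zero _).symm

theorem Module.End.pow_apply_mem_span_of_aeval_eq_zero {K M : Type*} [Field K] [AddCommGroup M]
    [Module K M] (T : End K M) {x : M} {p : Polynomial K} (hp : p ≠ 0)
    (hx : Polynomial.aeval T p x = 0) (n : ℕ) :
    (T ^ n) x ∈ span K (range fun j : Fin p.natDegree => (T ^ (j : ℕ)) x) := by
  set r := Polynomial.X ^ n % p
  have hr : (T ^ n) x = Polynomial.aeval T r x := by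
    conv_lhs => rw [← Polynomial.aeval_X_pow (R := K) (x := T) (n := n),
      ← EuclideanDomain.mod_add_div (Polynomial.X ^ n) p]
    rw [map_add, mul_comm, map_mul, LinearMap.add_apply, Module.End.mul_apply, hx, map_zero,
      add_zero]
  rw [hr]
  by_cases hr0 : r = 0
  · rw [hr0, map_zero, LinearMap.zero_apply]
    exact zero_mem _
  have hdeg : r.natDegree < p.natDegree :=
    Polynomial.natDegree_lt_natDegree hr0 (EuclideanDomain.mod_lt _ hp)
  rw [Polynomial.aeval_eq_sum_range' hdeg, Finset.sum_range, LinearMap.sum_apply]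
  exact sum_mem fun j _ => smul_mem _ _ (subset_span ⟨j, rfl⟩)

theorem MvPolynomial.totalDegree_le_of_mem_span {σ R ι : Type*} [CommSemiring R] [Fintype ι]
    (v : ι → MvPolynomial σ R) {p : MvPolynomial σ R} (hp : p ∈ span R (range v)) :
    p.totalDegree ≤ Finset.univ.sup fun j => (v j).totalDegree := by
  refine (mem_restrictTotalDegree _ _ _).1 (span_le.2 ?_ hp)
  rintro _ ⟨j, rfl⟩
  exact (mem_restrictTotalDegree _ _ _).2
    (Finset.le_sup (f := fun j => (v j).totalDegree) (Finset.mem_univ j))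

theorem bind₁_mvIter_apply {k : ℕ} (f : Fin k → MvPolynomial (Fin k) ℂ) (n : ℕ)
    (p : MvPolynomial (Fin k) ℂ) : bind₁ (mvIter f n) p = ((bind₁ f).toLinearMap ^ n) p := by
  induction n generalizing p with
  | zero => simp [mvIter]
  | succ n ih =>
    rw [pow_succ, Module.End.mul_apply, ← ih, AlgHom.toLinearMap_apply, bind₁_bind₁]
    rfl

theorem mvIter_eq_pow_apply {k : ℕ} (f : Fin k → MvPolynomial (Fin k) ℂ) (n : ℕ)
    (i : Fin k) : mvIter f n i = ((bind₁ f).toLinearMap ^ n) (X i) := by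
  rw [← bind₁_mvIter_apply, bind₁_X_right]

/-- A polynomial endomorphism of `ℂᵏ` has uniformly bounded iterate degrees
(i.e. is locally finite) if and only if there is a nontrivial vanishing linear
combination `a₁ f + a₂ f^[2] + ⋯ + a_d f^[d] = 0` of its iterates. -/
theorem locally_finite_iff_linear_relation {k : ℕ} (f : Fin k → MvPolynomial (Fin k) ℂ) :
    (∃ D : ℕ, ∀ n : ℕ, ∀ i : Fin k, (mvIter f n i).totalDegree ≤ D) ↔
    ∃ d : ℕ, 1 ≤ d ∧ ∃ a : Fin d → ℂ, a ≠ 0 ∧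
      ∀ i : Fin k, ∑ j : Fin d, a j • mvIter f ((j : ℕ) + 1) i = 0 := by
  constructor
  · rintro ⟨D, hD⟩
    let V := Fin k → restrictTotalDegree (Fin k) ℂ D
    obtain ⟨a, ha, hrel⟩ := exists_ne_zero_sum_smul_eq_zero (K := ℂ) fun n : ℕ =>
      (fun i => ⟨mvIter f (n + 1) i, (mem_restrictTotalDegree _ _ _).2 (hD _ i)⟩ : V)
    refine ⟨_, Nat.le_add_left 1 _, a, ha, fun i => ?_⟩
    simpa using congrArg (fun w : V => (w i : MvPolynomial (Fin k) ℂ)) hrel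
  · rintro ⟨d, -, a, ha, hrel⟩
    classical
    set T := (bind₁ f).toLinearMap
    set P : Polynomial ℂ := Polynomial.X * Polynomial.ofFn d a
    have hP : ∀ i, Polynomial.aeval T P (X i) = 0 := by
      intro i
      simpa [P, Polynomial.aeval_X_mul_ofFn, mvIter_eq_pow_apply] using hrel i
    let B i := Finset.univ.sup fun j : Fin P.natDegree =>
      ((T ^ (j : ℕ)) (X i)).totalDegree
    refine ⟨Finset.univ.sup B, fun n i => ?_⟩
    have hspan := Module.End.pow_apply_mem_span_of_aeval_eq_zero T
      (Polynomial.X_mul_ofFn_ne_zero ha) (hP i) n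
    rw [mvIter_eq_pow_apply]
    exact (totalDegree_le_of_mem_span _ hspan).trans (Finset.le_sup (f := B) (Finset.mem_univ i))
end

section
/- Let f be a monic polynomial of degree d ≥ 2. Then the limit G(z) = lim_{n→∞} d^{-n} log⁺|f^[n](z)| exists for every z ∈ ℂ, and G(z) > 0 if and only if |f^[n](z)| → ∞. -/
/-!
A polynomial of degree `d` satisfies `log⁺ ‖f w‖ = d · log⁺ ‖w‖ + O(1)` uniformly in `w`: the
upper bound from the coefficients, the lower bound from `f w ~ a wᵈ` at infinity, where `a` is the
leading coefficient. Hence `uₙ = log⁺ ‖f^[n] z‖` satisfies `|uₙ₊₁ - d uₙ| ≤ C`, so `uₙ / dⁿ` has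
geometrically small increments and converges to some `L`. If `L > 0` then `uₙ ≳ L dⁿ → ∞`.
Conversely, with `K = C / (d - 1)` the sequence `(uₙ - K) / dⁿ` is nondecreasing, so once the orbit
escapes far enough that `uₙ > K` the limit is positive.
-/

open Filter Topology Polynomial
open scoped Real

section GrowthRecursion

variable {u : ℕ → ℝ} {d C L : ℝ}

theorem cauchySeq_inv_pow_mul_of_abs_sub_mul_le (hd : 1 < d)
    (hu : ∀ n, |u (n + 1) - d * u n| ≤ C) : CauchySeq fun n => (d ^ n)⁻¹ * u n := by
  refine cauchySeq_of_le_geometric d⁻¹ (C * d⁻¹) (inv_lt_one_of_one_lt₀ hd) fun n => ?_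
  have hdiff : (d ^ (n + 1))⁻¹ * u (n + 1) - (d ^ n)⁻¹ * u n
      = (d ^ (n + 1))⁻¹ * (u (n + 1) - d * u n) := by
    field_simp
    ring
  calc dist ((d ^ n)⁻¹ * u n) ((d ^ (n + 1))⁻¹ * u (n + 1))
      = (d ^ (n + 1))⁻¹ * |u (n + 1) - d * u n| := by
        rw [dist_comm, Real.dist_eq, hdiff, abs_mul, abs_of_pos (by positivity)]
    _ ≤ (d ^ (n + 1))⁻¹ * C := by gcongr; exact hu n
    _ = C * d⁻¹ * d⁻¹ ^ n := by rw [← inv_pow, pow_succ']; ring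

theorem tendsto_atTop_of_tendsto_inv_pow_mul (hd : 1 < d)
    (hL : Tendsto (fun n => (d ^ n)⁻¹ * u n) atTop (𝓝 L)) (hL0 : 0 < L) :
    Tendsto u atTop atTop := by
  refine ((tendsto_pow_atTop_atTop_of_one_lt hd).atTop_mul_pos hL0 hL).congr fun n => ?_
  exact mul_inv_cancel_left₀ (pow_ne_zero n (zero_lt_one.trans hd).ne') (u n)

theorem pos_of_tendsto_inv_pow_mul_of_tendsto_atTop (hd : 1 < d)
    (hu : ∀ n, d * u n - C ≤ u (n + 1))
    (hL : Tendsto (fun n => (d ^ n)⁻¹ * u n) atTop (𝓝 L)) (hesc : Tendsto u atTop atTop) :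
    0 < L := by
  have hd0 : 0 < d := zero_lt_one.trans hd
  set K := C / (d - 1)
  have hmono : Monotone fun n => (d ^ n)⁻¹ * (u n - K) := by
    refine monotone_nat_of_le_succ fun n => ?_
    have hK : (d - 1) * K = C := mul_div_cancel₀ C (sub_pos.mpr hd).ne'
    rw [pow_succ, mul_inv, mul_assoc]
    gcongr
    rw [le_inv_mul_iff₀ hd0]
    linarith [hu n]
  have hlim : Tendsto (fun n => (d ^ n)⁻¹ * (u n - K)) atTop (𝓝 L) := by
    have hinv : Tendsto (fun n => (d ^ n)⁻¹) atTop (𝓝 0) :=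
      tendsto_inv_atTop_zero.comp (tendsto_pow_atTop_atTop_of_one_lt hd)
    simpa [mul_sub] using hL.sub (hinv.mul_const K)
  obtain ⟨n₀, hn₀⟩ := (hesc.eventually_gt_atTop K).exists
  calc 0 < (d ^ n₀)⁻¹ * (u n₀ - K) := mul_pos (by positivity) (sub_pos.mpr hn₀)
    _ ≤ L := hmono.ge_of_tendsto hlim n₀

theorem exists_tendsto_inv_pow_mul_and_pos_iff (hd : 1 < d)
    (hu : ∀ n, |u (n + 1) - d * u n| ≤ C) :
    ∃ L, Tendsto (fun n => (d ^ n)⁻¹ * u n) atTop (𝓝 L) ∧ (0 < L ↔ Tendsto u atTop atTop) := by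
  obtain ⟨L, hL⟩ := cauchySeq_tendsto_of_complete (cauchySeq_inv_pow_mul_of_abs_sub_mul_le hd hu)
  refine ⟨L, hL, tendsto_atTop_of_tendsto_inv_pow_mul hd hL, ?_⟩
  refine pos_of_tendsto_inv_pow_mul_of_tendsto_atTop hd (C := C) (fun n => ?_) hL
  linarith [(abs_le.mp (hu n)).1]

end GrowthRecursion

theorem Real.tendsto_posLog_comp_atTop_iff {α : Type*} {l : Filter α} {a : α → ℝ}
    (ha : ∀ x, 0 ≤ a x) : Tendsto (fun x => log⁺ (a x)) l atTop ↔ Tendsto a l atTop := by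
  refine ⟨fun h => tendsto_atTop_mono (fun x => ?_) h, fun h => ?_⟩
  · exact max_le (ha x) (Real.log_le_self (ha x))
  · exact tendsto_atTop_mono (fun x => le_max_right _ _) (Real.tendsto_log_atTop.comp h)

namespace Polynomial

variable {𝕜 : Type*} [NormedField 𝕜]

theorem norm_eval_le_sum_norm_coeff_mul_max_one_pow (P : 𝕜[X]) (w : 𝕜) :
    ‖P.eval w‖ ≤ (∑ i ∈ Finset.range (P.natDegree + 1), ‖P.coeff i‖) * max 1 ‖w‖ ^ P.natDegree := by
  rw [eval_eq_sum_range, Finset.sum_mul]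
  refine (norm_sum_le _ _).trans (Finset.sum_le_sum fun i hi => ?_)
  rw [norm_mul, norm_pow]
  gcongr
  calc ‖w‖ ^ i ≤ max 1 ‖w‖ ^ i := by gcongr; exact le_max_right _ _
    _ ≤ max 1 ‖w‖ ^ P.natDegree :=
      pow_le_pow_right₀ (le_max_left _ _) (Nat.lt_succ_iff.mp (Finset.mem_range.mp hi))

theorem exists_pow_norm_le_mul_norm_eval {P : 𝕜[X]} (hP : P ≠ 0) :
    ∃ R B : ℝ, ∀ w : 𝕜, R ≤ ‖w‖ → ‖w‖ ^ P.natDegree ≤ B * ‖P.eval w‖ := by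
  obtain ⟨c, hc⟩ := (isEquivalent_cobounded_leading_monomial (P := P)).isBigO_symm.bound
  obtain ⟨R, -, hR⟩ := hasBasis_cobounded_norm.eventually_iff.mp hc
  have hlead : 0 < ‖P.leadingCoeff‖ := norm_pos_iff.mpr (leadingCoeff_ne_zero.mpr hP)
  refine ⟨R, c / ‖P.leadingCoeff‖, fun w hw => ?_⟩
  have hbound := hR hw
  rw [norm_mul, norm_pow] at hbound
  rw [div_mul_eq_mul_div, le_div_iff₀ hlead]
  linarith

theorem exists_abs_posLog_norm_eval_sub_le {P : 𝕜[X]} (hP : P ≠ 0) :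
    ∃ C : ℝ, ∀ w : 𝕜, |log⁺ ‖P.eval w‖ - P.natDegree * log⁺ ‖w‖| ≤ C := by
  obtain ⟨R, B, hRB⟩ := exists_pow_norm_le_mul_norm_eval hP
  set d := P.natDegree
  set S := ∑ i ∈ Finset.range (d + 1), ‖P.coeff i‖
  have hS : 0 ≤ log⁺ S := Real.posLog_nonneg
  have hB : 0 ≤ log⁺ B := Real.posLog_nonneg
  have hR : 0 ≤ d * log⁺ R := mul_nonneg d.cast_nonneg Real.posLog_nonneg
  refine ⟨log⁺ S + log⁺ B + d * log⁺ R, fun w => abs_le.mpr ⟨?_, ?_⟩⟩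
  · have hlower : d * log⁺ ‖w‖ ≤ log⁺ B + d * log⁺ R + log⁺ ‖P.eval w‖ := by
      rcases le_or_gt R ‖w‖ with hw | hw
      · calc d * log⁺ ‖w‖ = log⁺ (‖w‖ ^ d) := (Real.posLog_pow d _).symm
          _ ≤ log⁺ (B * ‖P.eval w‖) := Real.posLog_le_posLog (by positivity) (hRB w hw)
          _ ≤ log⁺ B + log⁺ ‖P.eval w‖ := Real.posLog_mul
          _ ≤ _ := by linarith
      · have : d * log⁺ ‖w‖ ≤ d * log⁺ R := by gcongr
        linarith [Real.posLog_nonneg (x := ‖P.eval w‖)]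
    linarith
  · have hmax : log⁺ (max 1 ‖w‖) = log⁺ ‖w‖ := by
      rw [Real.posLog_eq_log_max_one (norm_nonneg w),
        Real.posLog_eq_log_max_one (zero_le_one.trans (le_max_left _ _)), sup_left_idem]
    have hupper : log⁺ ‖P.eval w‖ ≤ log⁺ S + d * log⁺ ‖w‖ :=
      calc log⁺ ‖P.eval w‖ ≤ log⁺ (S * max 1 ‖w‖ ^ d) :=
            Real.posLog_le_posLog (norm_nonneg _) (norm_eval_le_sum_norm_coeff_mul_max_one_pow P w)
        _ ≤ log⁺ S + log⁺ (max 1 ‖w‖ ^ d) := Real.posLog_mul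
        _ = log⁺ S + d * log⁺ ‖w‖ := by rw [Real.posLog_pow, hmax]
    linarith

end Polynomial

theorem green_function_exists_and_positive_iff_escaping_general (f : Polynomial ℂ) (d : ℕ)
    (hd : 2 ≤ d) (hdeg : f.natDegree = d) (z : ℂ) :
    ∃ L : ℝ, Tendsto
      (fun n : ℕ => ((d : ℝ) ^ n)⁻¹ * Real.log (max ‖(f.eval)^[n] z‖ 1))
      atTop (nhds L) ∧
      (0 < L ↔ Tendsto (fun n => ‖(f.eval)^[n] z‖) atTop atTop) := by
  obtain ⟨C, hC⟩ := f.exists_abs_posLog_norm_eval_sub_le (ne_zero_of_natDegree_gt (hdeg ▸ hd))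
  obtain ⟨L, hL, hpos⟩ := exists_tendsto_inv_pow_mul_and_pos_iff (u := fun n => log⁺ ‖f.eval^[n] z‖)
    (Nat.one_lt_cast.mpr hd) fun n => by
      simpa only [Function.iterate_succ_apply', hdeg] using hC (f.eval^[n] z)
  refine ⟨L, ?_, hpos.trans (Real.tendsto_posLog_comp_atTop_iff fun _ => norm_nonneg _)⟩
  convert hL using 3 with n
  rw [max_comm, Real.posLog_eq_log_max_one (norm_nonneg _)]

/-- For a monic polynomial of degree `d ≥ 2` the Green's function limit
`lim d⁻ⁿ log⁺ |f^[n](z)|` exists at every point, and it is positive exactly on the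
escaping set. -/
theorem green_function_exists_and_positive_iff_escaping (f : Polynomial ℂ) (d : ℕ)
    (hd : 2 ≤ d) (hdeg : f.natDegree = d) (hmonic : f.Monic) (z : ℂ) :
    ∃ L : ℝ, Tendsto
      (fun n : ℕ => ((d : ℝ) ^ n)⁻¹ * Real.log (max ‖(f.eval)^[n] z‖ 1))
      atTop (nhds L) ∧
      (0 < L ↔ Tendsto (fun n => ‖(f.eval)^[n] z‖) atTop atTop) :=
  green_function_exists_and_positive_iff_escaping_general f d hd hdeg z
end

section
/- Let X be a Banach space and (gₙ)_{n ∈ ℕ} a sequence in X with the recurrence property: for every ε > 0 and every n there exists m > n with ‖g_m − g_n‖ < ε. Then there exists a sequence (aₙ) of complex numbers, not identically zero, such that the partial sums ∑_{n=0}^{N} aₙ gₙ converge in X to 0. -/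
/-!
Every `g n` is a limit point of later terms, so a finite combination `x = ∑ dₙ gₙ` can be
reproduced to within `ε` by coefficients supported arbitrarily far out, with all intermediate
partial sums of norm at most `‖x‖ + ε`. Starting from `a₀ = 1`, keep appending such a block that
reproduces minus the current total `∑_{n<N} aₙ gₙ` with accuracy `ε_k → 0`: the totals tend to
`0`, and inside the `k`-th block the partial sums stay below twice the previous total plus `ε_k`.
-/

open Filter Finset Function Topology

section

variable {X : Type*} [SeminormedAddCommGroup X]

def IsRecurrent (g : ℕ → X) : Prop :=
  ∀ ε > (0 : ℝ), ∀ n : ℕ, ∃ m > n, ‖g m - g n‖ < ε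

lemma IsRecurrent.exists_gt_norm_sub_lt {g : ℕ → X} (hg : IsRecurrent g) (n M : ℕ) {ε : ℝ}
    (hε : 0 < ε) : ∃ m > M, ‖g m - g n‖ < ε := by
  induction M generalizing ε with
  | zero => exact (hg ε hε n).imp fun m ⟨hm, h⟩ => ⟨by omega, h⟩
  | succ M ih =>
    obtain ⟨m, hm, h⟩ := ih (half_pos hε)
    obtain ⟨m', hm', h'⟩ := hg _ (half_pos hε) m
    refine ⟨m', by omega, ?_⟩
    calc ‖g m' - g n‖ ≤ ‖g m' - g m‖ + ‖g m - g n‖ := norm_sub_le_norm_sub_add_norm_sub _ _ _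
      _ < ε := by linarith

variable [NormedSpace ℝ X]

def partialSum (g : ℕ → X) (c : ℕ → ℝ) (K : ℕ) : X :=
  ∑ n ∈ range K, c n • g n

section partialSum

variable {g : ℕ → X} {c c' : ℕ → ℝ} {M N K : ℕ}

lemma partialSum_add (g : ℕ → X) (c c' : ℕ → ℝ) (K : ℕ) :
    partialSum g (c + c') K = partialSum g c K + partialSum g c' K := by
  simp only [partialSum, Pi.add_apply, add_smul, sum_add_distrib]

lemma partialSum_congr (h : ∀ n < K, c n = c' n) : partialSum g c K = partialSum g c' K :=
  sum_congr rfl fun n hn => by rw [h n (mem_range.1 hn)]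

lemma partialSum_single (g : ℕ → X) (m : ℕ) (t : ℝ) (K : ℕ) :
    partialSum g (Pi.single m t) K = if m < K then t • g m else 0 := by
  simp only [partialSum, Pi.single_apply, ite_smul, zero_smul, sum_ite_eq', mem_range]

lemma partialSum_indicator_Iio (g : ℕ → X) (c : ℕ → ℝ) (N K : ℕ) :
    partialSum g ((Set.Iio N).indicator c) K = partialSum g c (min K N) := by
  have : range (min K N) = (range K).filter (· < N) := by ext; simp
  simp only [partialSum, Set.indicator_apply, Set.mem_Iio, ite_smul, zero_smul, this,
    sum_filter]

lemma partialSum_eq_zero_of_support_subset (hc : support c ⊆ Set.Ici M) (hK : K ≤ M) :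
    partialSum g c K = 0 :=
  sum_eq_zero fun n hn => by
    rw [notMem_support.1 fun h => (hc h).not_gt ((mem_range.1 hn).trans_le hK), zero_smul]

lemma partialSum_eq_of_support_subset (hc : support c ⊆ Set.Iio N) (hK : N ≤ K) :
    partialSum g c K = partialSum g c N :=
  (sum_subset (range_subset_range.2 hK) fun n _ hn =>
    by rw [notMem_support.1 fun h => hn (mem_range.2 (hc h)), zero_smul]).symm

end partialSum

structure IsBlock (g : ℕ → X) (c : ℕ → ℝ) (M N : ℕ) (x : X) (ε r : ℝ) : Prop where
  le : M ≤ N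
  support_subset : support c ⊆ Set.Ico M N
  norm_sub_le : ‖partialSum g c N - x‖ ≤ ε
  norm_partialSum_le : ∀ K, ‖partialSum g c K‖ ≤ r

namespace IsBlock

variable {g : ℕ → X} {c c₁ c₂ : ℕ → ℝ} {M N N₁ N₂ : ℕ} {x x₁ x₂ : X} {ε ε' ε₁ ε₂ r r' r₁ r₂ : ℝ}

lemma zero (g : ℕ → X) (M : ℕ) {r : ℝ} (hr : 0 ≤ r) : IsBlock g 0 M M 0 0 r where
  le := le_rfl
  support_subset := by simp
  norm_sub_le := by simp [partialSum]
  norm_partialSum_le _ := by simpa [partialSum] using hr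

lemma mono (h : IsBlock g c M N x ε r) (hε : ε ≤ ε') (hr : r ≤ r') :
    IsBlock g c M N x ε' r' :=
  ⟨h.le, h.support_subset, h.norm_sub_le.trans hε, fun K => (h.norm_partialSum_le K).trans hr⟩

lemma nonneg (h : IsBlock g c M N x ε r) : 0 ≤ ε ∧ 0 ≤ r :=
  ⟨(norm_nonneg _).trans h.norm_sub_le, (norm_nonneg _).trans (h.norm_partialSum_le 0)⟩

lemma norm_partialSum_le_add (h : IsBlock g c M N x ε r) : ‖partialSum g c N‖ ≤ ‖x‖ + ε := by
  have := norm_le_norm_add_norm_sub' (partialSum g c N) x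
  linarith [h.norm_sub_le]

lemma add (h₁ : IsBlock g c₁ M N₁ x₁ ε₁ r₁) (h₂ : IsBlock g c₂ N₁ N₂ x₂ ε₂ r₂) :
    IsBlock g (c₁ + c₂) M N₂ (x₁ + x₂) (ε₁ + ε₂) (max r₁ (‖x₁‖ + ε₁ + r₂)) := by
  have hc₁ : support c₁ ⊆ Set.Iio N₁ := h₁.support_subset.trans Set.Ico_subset_Iio_self
  have hc₂ : support c₂ ⊆ Set.Ici N₁ := h₂.support_subset.trans Set.Ico_subset_Ici_self
  refine ⟨h₁.le.trans h₂.le, ?_, ?_, fun K => ?_⟩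
  · refine (support_add _ _).trans (Set.union_subset ?_ ?_)
    · exact h₁.support_subset.trans (Set.Ico_subset_Ico_right h₂.le)
    · exact h₂.support_subset.trans (Set.Ico_subset_Ico_left h₁.le)
  · rw [partialSum_add, partialSum_eq_of_support_subset hc₁ h₂.le, add_sub_add_comm]
    exact (norm_add_le _ _).trans (add_le_add h₁.norm_sub_le h₂.norm_sub_le)
  · rw [partialSum_add]
    rcases le_total K N₁ with hK | hK
    · rw [partialSum_eq_zero_of_support_subset hc₂ hK, add_zero]
      exact (h₁.norm_partialSum_le K).trans (le_max_left _ _)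
    · rw [partialSum_eq_of_support_subset hc₁ hK]
      refine le_max_of_le_right ((norm_add_le _ _).trans (add_le_add ?_ ?_))
      exacts [h₁.norm_partialSum_le_add, h₂.norm_partialSum_le K]

lemma exists_nsmul {y : X} {e ρ : ℝ}
    (hy : ∀ M, ∃ N c, IsBlock g c M N y e ρ) (r M : ℕ) :
    ∃ N c, IsBlock g c M N ((r : ℝ) • y) (r * e) (r * ‖y‖ + r * e + ρ) := by
  obtain ⟨he, hρ⟩ := (hy 0).choose_spec.choose_spec.nonneg
  induction r with
  | zero => exact ⟨M, 0, by simpa using IsBlock.zero g M hρ⟩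
  | succ r ih =>
    obtain ⟨N₁, c₁, h₁⟩ := ih
    obtain ⟨N₂, c₂, h₂⟩ := hy N₁
    refine ⟨N₂, c₁ + c₂, ?_⟩
    have hr : ‖(r : ℝ) • y‖ = r * ‖y‖ := by simp [norm_smul]
    convert (h₁.add h₂).mono le_rfl (max_le ?_ ?_) using 1
    · push_cast; rw [add_smul, one_smul]
    · push_cast; ring
    all_goals push_cast; nlinarith [norm_nonneg y]

end IsBlock

namespace IsRecurrent

variable {g : ℕ → X}

lemma exists_isBlock_smul (hg : IsRecurrent g) (t : ℝ) (n M : ℕ) {δ : ℝ} (hδ : 0 < δ) :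
    ∃ N c, IsBlock g c M N (t • g n) (δ * |t|) (|t| * ‖g n‖ + δ * |t|) := by
  obtain ⟨m, hm, hgm⟩ := hg.exists_gt_norm_sub_lt n M hδ
  have hnorm : ‖g m‖ ≤ ‖g n‖ + δ := by linarith [norm_le_norm_add_norm_sub' (g m) (g n)]
  refine ⟨m + 1, Pi.single m t, ⟨by omega, ?_, ?_, fun K => ?_⟩⟩
  · exact Pi.support_single_subset.trans (by simp; omega)
  · rw [partialSum_single, if_pos (Nat.lt_succ_self m), ← smul_sub, norm_smul, Real.norm_eq_abs]
    nlinarith [abs_nonneg t]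
  · rw [partialSum_single]
    split_ifs
    · rw [norm_smul, Real.norm_eq_abs]; nlinarith [abs_nonneg t]
    · rw [norm_zero]; positivity

lemma exists_isBlock_sum (hg : IsRecurrent g) (S : Finset ℕ) (d : ℕ → ℝ) (M : ℕ) {δ : ℝ}
    (hδ : 0 < δ) :
    ∃ N c, IsBlock g c M N (∑ n ∈ S, d n • g n) (δ * ∑ n ∈ S, |d n|)
      ((∑ n ∈ S, |d n| * ‖g n‖) + δ * ∑ n ∈ S, |d n|) := by
  classical
  induction S using Finset.induction_on generalizing M with
  | empty => exact ⟨M, 0, by simpa using IsBlock.zero g M le_rfl⟩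
  | insert a S ha ih =>
    obtain ⟨N₁, c₁, h₁⟩ := hg.exists_isBlock_smul (d a) a M hδ
    obtain ⟨N₂, c₂, h₂⟩ := ih N₁
    have hrest : 0 ≤ (∑ n ∈ S, |d n| * ‖g n‖) + δ * ∑ n ∈ S, |d n| := h₂.nonneg.2
    refine ⟨N₂, c₁ + c₂, ?_⟩
    simp only [sum_insert ha]
    refine (h₁.add h₂).mono (mul_add δ _ _).symm.le (max_le ?_ ?_)
    · linarith
    · rw [norm_smul, Real.norm_eq_abs]; linarith

/-- Reproducing `x / R` in `R` successive rounds keeps every partial sum within `O(1 / R)` of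
the segment from `0` to `x`. -/
lemma exists_isBlock (hg : IsRecurrent g) (S : Finset ℕ) (d : ℕ → ℝ) (M : ℕ) {ε : ℝ}
    (hε : 0 < ε) :
    ∃ N c, IsBlock g c M N (∑ n ∈ S, d n • g n) ε (‖∑ n ∈ S, d n • g n‖ + ε) := by
  set x := ∑ n ∈ S, d n • g n
  set A := ∑ n ∈ S, |d n|
  set B := ∑ n ∈ S, |d n| * ‖g n‖
  have hA : 0 ≤ A := sum_nonneg fun n _ => abs_nonneg _
  have hB : 0 ≤ B := sum_nonneg fun n _ => by positivity
  obtain ⟨R, hR⟩ := exists_nat_gt (4 * B / ε)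
  have hR0 : (0 : ℝ) < R := lt_of_le_of_lt (by positivity) hR
  have hR1 : (1 : ℝ) ≤ R := Nat.one_le_cast.2 (Nat.cast_pos.1 hR0)
  have hBR : B / R < ε / 4 := by
    rw [div_lt_iff₀ hR0]; rw [div_lt_iff₀ hε] at hR; linarith
  set δ := ε / (4 * (A + 1))
  have hδ : 0 < δ := by positivity
  have hδA : δ * A ≤ ε / 4 := by
    rw [div_mul_eq_mul_div, div_le_div_iff₀ (by positivity) (by norm_num)]; nlinarith
  set y := ∑ n ∈ S, (d n / R) • g n
  have hxy : (R : ℝ) • y = x := by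
    simp only [y, x, smul_sum, smul_smul, mul_div_cancel₀ _ hR0.ne']
  have hy : ∀ M, ∃ N c, IsBlock g c M N y (δ * A / R) ((B + δ * A) / R) := fun M => by
    obtain ⟨N, c, h⟩ := hg.exists_isBlock_sum S (fun n => d n / R) M hδ
    refine ⟨N, c, h.mono (le_of_eq ?_) (le_of_eq ?_)⟩ <;>
      simp only [A, B, abs_div, Nat.abs_cast, div_mul_eq_mul_div, ← sum_div] <;> ring
  obtain ⟨N, c, h⟩ := IsBlock.exists_nsmul hy R M
  have hyx : (R : ℝ) * ‖y‖ = ‖x‖ := by rw [← hxy, norm_smul, Real.norm_natCast]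
  rw [hxy, hyx, mul_div_cancel₀ _ hR0.ne'] at h
  refine ⟨N, c, h.mono (by linarith) ?_⟩
  have : δ * A / R ≤ δ * A := div_le_self (by positivity) hR1
  rw [add_div]
  linarith

end IsRecurrent

lemma IsRecurrent.exists_extension {g : ℕ → X} (hg : IsRecurrent g) (c : ℕ → ℝ) (N : ℕ)
    {ε : ℝ} (hε : 0 < ε) :
    ∃ N' > N, ∃ c' : ℕ → ℝ, (∀ n < N, c' n = c n) ∧ ‖partialSum g c' N'‖ ≤ ε ∧
      ∀ K ≥ N, ‖partialSum g c' K‖ ≤ 2 * ‖partialSum g c N‖ + ε := by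
  obtain ⟨N', b, hb⟩ := hg.exists_isBlock (range N) (fun n => -c n) (N + 1) hε
  have hx : ∑ n ∈ range N, (-c n) • g n = -partialSum g c N := by
    simp only [partialSum, neg_smul, sum_neg_distrib]
  rw [hx, norm_neg] at hb
  have hshift : ∀ K ≥ N, partialSum g ((Set.Iio N).indicator c + b) K =
      partialSum g b K + partialSum g c N := fun K hK => by
    rw [partialSum_add, partialSum_indicator_Iio, min_eq_right hK, add_comm]
  refine ⟨N', hb.le, (Set.Iio N).indicator c + b, fun n hn => ?_, ?_, fun K hK => ?_⟩
  · have hbn : b n = 0 := notMem_support.1 fun h => by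
      have := (hb.support_subset h).1; omega
    simp [hn, hbn]
  · rw [hshift N' (N.le_succ.trans hb.le), ← sub_neg_eq_add]
    exact hb.norm_sub_le
  · rw [hshift K hK]
    linarith [norm_add_le (partialSum g b K) (partialSum g c N), hb.norm_partialSum_le K]

lemma exists_seq_of_forall_exists {α : Type*} {R : ℕ → α → α → Prop}
    (h : ∀ k x, ∃ y, R k x y) (x₀ : α) : ∃ s : ℕ → α, s 0 = x₀ ∧ ∀ k, R k (s k) (s (k + 1)) := by
  choose F hF using h
  exact ⟨fun k => Nat.rec x₀ F k, rfl, fun k => hF k _⟩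

section stages

variable {N : ℕ → ℕ} {c : ℕ → ℕ → ℝ}

lemma exists_forall_eq_of_agree (hN : StrictMono N) (hc : ∀ k, ∀ n < N k, c (k + 1) n = c k n) :
    ∃ a : ℕ → ℝ, ∀ k, ∀ n < N k, a n = c k n := by
  have hagree : ∀ k j, k ≤ j → ∀ n < N k, c j n = c k n := fun k j hkj => by
    induction j, hkj using Nat.le_induction with
    | base => exact fun _ _ => rfl
    | succ j hkj ih => exact fun n hn => (hc j n (hn.trans_le (hN.monotone hkj))).trans (ih n hn)
  refine ⟨fun n => c (n + 1) n, fun k n hn => ?_⟩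
  rcases le_total k (n + 1) with hk | hk
  · exact hagree k (n + 1) hk n hn
  · exact (hagree (n + 1) k hk n ((Nat.lt_succ_self n).trans_le (hN.id_le _))).symm

lemma norm_partialSum_le_of_agree {g : ℕ → X} (hc : ∀ k, ∀ n < N k, c (k + 1) n = c k n)
    {k : ℕ} {D : ℝ} (hD : ∀ i ≥ k, ∀ K ≥ N i, ‖partialSum g (c (i + 1)) K‖ ≤ D) :
    ∀ j > k, ∀ K ≥ N k, ‖partialSum g (c j) K‖ ≤ D := fun j hj => by
  induction j, hj using Nat.le_induction with
  | base => exact hD k le_rfl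
  | succ j hkj ih =>
    intro K hK
    rcases le_total K (N j) with hKj | hKj
    · rw [partialSum_congr fun n hn => hc j n (hn.trans_le hKj)]
      exact ih K hK
    · exact hD j (by omega) K hKj

lemma exists_tendsto_of_stages {g : ℕ → X} {D : ℕ → ℝ} (hN : StrictMono N)
    (hc : ∀ k, ∀ n < N k, c (k + 1) n = c k n)
    (hbound : ∀ k, ∀ K ≥ N k, ‖partialSum g (c (k + 1)) K‖ ≤ D k)
    (hD : Antitone D) (hD0 : Tendsto D atTop (𝓝 0)) :
    ∃ a : ℕ → ℝ, (∀ k, ∀ n < N k, a n = c k n) ∧ Tendsto (partialSum g a) atTop (𝓝 0) := by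
  obtain ⟨a, ha⟩ := exists_forall_eq_of_agree hN hc
  have htail : ∀ k, ∀ K ≥ N k, ‖partialSum g a K‖ ≤ D k := fun k K hK => by
    have hj : K ≤ N (max (k + 1) K) := (le_max_right _ _).trans (hN.id_le _)
    rw [partialSum_congr fun n hn => ha _ n (hn.trans_le hj)]
    exact norm_partialSum_le_of_agree hc (fun i hi K hK => (hbound i K hK).trans (hD hi))
      _ (by omega) K hK
  refine ⟨a, ha, NormedAddGroup.tendsto_nhds_zero.2 fun ε hε => ?_⟩
  obtain ⟨k, hk⟩ := (hD0.eventually (gt_mem_nhds hε)).exists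
  exact eventually_atTop.2 ⟨N k, fun K hK => (htail k K hK).trans_lt hk⟩

end stages

theorem IsRecurrent.exists_partialSum_tendsto_zero {g : ℕ → X} (hg : IsRecurrent g) :
    ∃ a : ℕ → ℝ, a 0 = 1 ∧ Tendsto (partialSum g a) atTop (𝓝 0) := by
  -- scaled so that the initial total `g 0` is already within `ε 0`
  set ε : ℕ → ℝ := fun k => (‖g 0‖ + 1) * 2⁻¹ ^ k
  have hε : ∀ k, 0 < ε k := fun k => by positivity
  have hε_succ : ∀ k, ε (k + 1) = ε k / 2 := fun k => by simp only [ε, pow_succ]; ring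
  have hε_anti : Antitone ε := antitone_nat_of_succ_le fun k => by linarith [hε_succ k, hε k]
  obtain ⟨s, hs0, hs⟩ := exists_seq_of_forall_exists (x₀ := (1, Pi.single 0 1))
    (R := fun k p q => p.1 < q.1 ∧ (∀ n < p.1, q.2 n = p.2 n) ∧
      ‖partialSum g q.2 q.1‖ ≤ ε (k + 1) ∧
      ∀ K ≥ p.1, ‖partialSum g q.2 K‖ ≤ 2 * ‖partialSum g p.2 p.1‖ + ε (k + 1))
    fun k p =>
      let ⟨N', hN', c', h⟩ := hg.exists_extension p.2 p.1 (hε (k + 1))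
      ⟨(N', c'), hN', h⟩
  have herr : ∀ k, ‖partialSum g (s k).2 (s k).1‖ ≤ ε k
    | 0 => by simp [hs0, partialSum_single, ε]
    | k + 1 => (hs k).2.2.1
  obtain ⟨a, ha, hlim⟩ := exists_tendsto_of_stages (N := fun k => (s k).1) (c := fun k => (s k).2)
    (D := fun k => 3 * ε k)
    (strictMono_nat_of_lt_succ fun k => (hs k).1) (fun k => (hs k).2.1)
    (fun k K hK => ((hs k).2.2.2 K hK).trans <| show _ ≤ 3 * ε k by
      linarith [herr k, hε_succ k, hε k])
    (fun i j hij => mul_le_mul_of_nonneg_left (hε_anti hij) (by norm_num))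
    (by simpa using ((tendsto_pow_atTop_nhds_zero_of_lt_one (by norm_num) (by norm_num)).const_mul
      (‖g 0‖ + 1)).const_mul 3)
  exact ⟨a, by simpa [hs0] using ha 0 0 (by simp [hs0]), hlim⟩

end

theorem recurrent_sequence_has_time_average_general (X : Type*) [NormedAddCommGroup X]
    [NormedSpace ℂ X] (g : ℕ → X)
    (hrec : ∀ ε > (0 : ℝ), ∀ n : ℕ, ∃ m > n, ‖g m - g n‖ < ε) :
    ∃ a : ℕ → ℂ, (∃ n, a n ≠ 0) ∧
      Tendsto (fun N => ∑ n ∈ Finset.range (N + 1), a n • g n) atTop (nhds 0) := by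
  obtain ⟨a, ha0, ha⟩ := IsRecurrent.exists_partialSum_tendsto_zero (g := g) hrec
  -- the real action on `X` is the restriction of the complex one, so `(a n : ℂ) • g n` is
  -- definitionally `a n • g n`
  exact ⟨fun n => a n, ⟨0, by simp [ha0]⟩, ha.comp (tendsto_add_atTop_nat 1)⟩

/-- Abstract version of the Siegel-disc construction: a sequence in a Banach space with
the recurrence property (every term is approximated by some later term, to any accuracy)
admits a nontrivial weight sequence whose weighted partial sums converge to `0`. -/
theorem recurrent_sequence_has_time_average (X : Type*) [NormedAddCommGroup X]
    [NormedSpace ℂ X] [CompleteSpace X] (g : ℕ → X)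
    (hrec : ∀ ε > (0 : ℝ), ∀ n : ℕ, ∃ m > n, ‖g m - g n‖ < ε) :
    ∃ a : ℕ → ℂ, (∃ n, a n ≠ 0) ∧
      Tendsto (fun N => ∑ n ∈ Finset.range (N + 1), a n • g n) atTop (nhds 0) :=
  recurrent_sequence_has_time_average_general X g hrec
end
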